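/- arXiv:2309.07206 — 2 statements merged into one kernel-verified Lean document; each statement's English description precedes it below -/
import Mathlib

section
/- For any two density matrices ρ, ρ' and any positive trace non-increasing linear map E with Tr E(ρ) > 0 and Tr E(ρ') > 0, the normalized outputs satisfy (1/2)‖E(ρ)/Tr E(ρ) − E(ρ')/Tr E(ρ')‖₁ ≤ (1/2)‖ρ − ρ'‖₁ / Tr E(ρ). -/
open Matrix Filter ComplexOrder
noncomputable section
open scoped Classical

variable {d : Type*} [Fintype d] [DecidableEq d]

/-- A density matrix: positive semidefinite with unit trace. -/
def IsDensity (ρ : Matrix d d ℂ) : Prop := ρ.PosSemidef ∧ ρ.trace = 1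

/-- Matrix square root (zero if the input is not positive semidefinite). -/
def msqrt (A : Matrix d d ℂ) : Matrix d d ℂ :=
  if h : A.PosSemidef then
    (h.1.eigenvectorUnitary : Matrix d d ℂ) * diagonal ((↑) ∘ (√·) ∘ h.1.eigenvalues) *
      (star h.1.eigenvectorUnitary : Matrix d d ℂ)
  else 0

/-- Trace norm ‖A‖₁ = Tr √(AᴴA). -/
def traceNorm (A : Matrix d d ℂ) : ℝ := (msqrt (Aᴴ * A)).trace.re

/-- Fidelity F(ρ,σ) = ‖√ρ√σ‖₁². -/
def fidelity (ρ σ : Matrix d d ℂ) : ℝ := (traceNorm (msqrt ρ * msqrt σ)) ^ 2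

/-- n-fold tensor power of a state. -/
def tensorPow (ρ : Matrix d d ℂ) (n : ℕ) : Matrix (Fin n → d) (Fin n → d) ℂ :=
  fun i j => ∏ k, ρ (i k) (j k)

section helpers
variable {n : Type*} [Fintype n] [DecidableEq n]
open scoped MatrixOrder

lemma msqrt_sq_eq {A C : Matrix n n ℂ} (hC : C.PosSemidef) (h : C ^ 2 = A) : msqrt A = C := by
  have hA : A.PosSemidef := h ▸ hC.pow 2
  have key : msqrt A = CFC.sqrt A := by
    rw [msqrt, dif_pos hA, CFC.sqrt_eq_cfc, cfc_nnreal_eq_real _ A, hA.1.cfc_eq]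
    simp only [IsHermitian.cfc, Unitary.conjStarAlgAut_apply, Unitary.coe_star, Real.coe_sqrt,
      Real.coe_toNNReal']
    congr 3
    funext i
    simp [max_eq_left (hA.eigenvalues_nonneg i)]
  rw [key, ← h]
  exact CFC.sqrt_unique (sq C).symm (nonneg_iff_posSemidef.mpr hC)

lemma star_mul_self_of_unitary (U : Matrix.unitaryGroup n ℂ) :
    star (U : Matrix n n ℂ) * (U : Matrix n n ℂ) = 1 := Matrix.mem_unitaryGroup_iff'.mp U.2

lemma conj_mul_conj (U : Matrix.unitaryGroup n ℂ) (D E : Matrix n n ℂ) :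
    ((U : Matrix n n ℂ) * D * star (U : Matrix n n ℂ)) *
      ((U : Matrix n n ℂ) * E * star (U : Matrix n n ℂ))
      = (U : Matrix n n ℂ) * (D * E) * star (U : Matrix n n ℂ) := by
  have h := star_mul_self_of_unitary U
  simp only [Matrix.mul_assoc]
  rw [← Matrix.mul_assoc (star (U : Matrix n n ℂ)) (U : Matrix n n ℂ), h, Matrix.one_mul]

lemma utrace_conj (U : Matrix.unitaryGroup n ℂ) (D : Matrix n n ℂ) :
    ((U : Matrix n n ℂ) * D * star (U : Matrix n n ℂ)).trace = D.trace := by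
  rw [Matrix.trace_mul_cycle, star_mul_self_of_unitary U, Matrix.one_mul]

lemma psd_conj (U : Matrix.unitaryGroup n ℂ) {D : Matrix n n ℂ} (hD : D.PosSemidef) :
    ((U : Matrix n n ℂ) * D * star (U : Matrix n n ℂ)).PosSemidef := by
  rw [Matrix.star_eq_conjTranspose]
  exact hD.mul_mul_conjTranspose_same _

lemma traceNorm_hermitian {A : Matrix n n ℂ} (hA : A.IsHermitian) :
    traceNorm A = ∑ i, |hA.eigenvalues i| := by
  set U := hA.eigenvectorUnitary with hU
  set C : Matrix n n ℂ :=
    (U : Matrix n n ℂ) * diagonal (fun i => ((|hA.eigenvalues i| : ℝ) : ℂ)) * star (U : Matrix n n ℂ)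
    with hC
  have hCpsd : C.PosSemidef :=
    psd_conj U (Matrix.PosSemidef.diagonal fun i => Complex.zero_le_real.mpr (abs_nonneg _))
  have hspec : A = (U : Matrix n n ℂ) * diagonal (fun i => ((hA.eigenvalues i : ℝ) : ℂ))
      * star (U : Matrix n n ℂ) := hA.spectral_theorem
  have hsq : C ^ 2 = Aᴴ * A := by
    rw [pow_two, hC, conj_mul_conj, hA.eq]
    conv_rhs => rw [hspec]
    rw [conj_mul_conj, Matrix.diagonal_mul_diagonal, Matrix.diagonal_mul_diagonal]
    have : (fun i => ((|hA.eigenvalues i| : ℝ) : ℂ) * ((|hA.eigenvalues i| : ℝ) : ℂ))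
        = fun i => ((hA.eigenvalues i : ℝ) : ℂ) * ((hA.eigenvalues i : ℝ) : ℂ) := by
      funext i
      rw [← Complex.ofReal_mul, ← Complex.ofReal_mul, abs_mul_abs_self]
    rw [this]
  rw [traceNorm, msqrt_sq_eq hCpsd hsq, hC, utrace_conj, Matrix.trace_diagonal]
  simp

lemma jordan_decomp {A : Matrix n n ℂ} (hA : A.IsHermitian) :
    ∃ P Q : Matrix n n ℂ, P.PosSemidef ∧ Q.PosSemidef ∧ A = P - Q ∧
      P.trace.re + Q.trace.re = traceNorm A := by
  set U := hA.eigenvectorUnitary with hU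
  refine ⟨(U : Matrix n n ℂ) * diagonal (fun i => ((max (hA.eigenvalues i) 0 : ℝ) : ℂ))
      * star (U : Matrix n n ℂ),
    (U : Matrix n n ℂ) * diagonal (fun i => ((max (-hA.eigenvalues i) 0 : ℝ) : ℂ))
      * star (U : Matrix n n ℂ), ?_, ?_, ?_, ?_⟩
  · exact psd_conj U (Matrix.PosSemidef.diagonal fun i =>
      Complex.zero_le_real.mpr (le_max_right _ _))
  · exact psd_conj U (Matrix.PosSemidef.diagonal fun i =>
      Complex.zero_le_real.mpr (le_max_right _ _))
  · have hspec : A = (U : Matrix n n ℂ) * diagonal (fun i => ((hA.eigenvalues i : ℝ) : ℂ))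
        * star (U : Matrix n n ℂ) := hA.spectral_theorem
    rw [← Matrix.sub_mul, ← Matrix.mul_sub, Matrix.diagonal_sub]
    conv_lhs => rw [hspec]
    have : (fun i => ((max (hA.eigenvalues i) 0 : ℝ) : ℂ) - ((max (-hA.eigenvalues i) 0 : ℝ) : ℂ))
        = fun i => ((hA.eigenvalues i : ℝ) : ℂ) := by
      funext i
      rw [← Complex.ofReal_sub, max_zero_sub_max_neg_zero_eq_self]
    rw [this]
  · rw [traceNorm_hermitian hA, utrace_conj, utrace_conj, Matrix.trace_diagonal,
      Matrix.trace_diagonal]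
    simp only [Complex.re_sum, Complex.ofReal_re]
    rw [← Finset.sum_add_distrib]
    exact Finset.sum_congr rfl fun i _ => max_zero_add_max_neg_zero_eq_abs_self _

lemma psd_diag_re_nonneg {M : Matrix n n ℂ} (hM : M.PosSemidef) (i : n) : 0 ≤ (M i i).re := by
  have h : 0 ≤ star (Pi.single i 1 : n → ℂ) ⬝ᵥ (M *ᵥ Pi.single i 1) := hM.dotProduct_mulVec_nonneg _
  have he : star (Pi.single i 1 : n → ℂ) ⬝ᵥ (M *ᵥ Pi.single i 1) = M i i := by
    simp [dotProduct, mulVec, Pi.single_apply, Finset.mul_sum]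
  rw [he] at h
  exact (Complex.le_def.mp h).1

lemma traceNorm_sub_le {R S : Matrix n n ℂ} (hR : R.PosSemidef) (hS : S.PosSemidef) :
    traceNorm (R - S) ≤ R.trace.re + S.trace.re := by
  have hA : (R - S).IsHermitian := hR.1.sub hS.1
  set U := hA.eigenvectorUnitary with hU
  have hdiag : star (U : Matrix n n ℂ) * (R - S) * (U : Matrix n n ℂ)
      = diagonal (fun i => ((hA.eigenvalues i : ℝ) : ℂ)) := by
    have h := hA.conjStarAlgAut_star_eigenvectorUnitary
    rw [Unitary.conjStarAlgAut_apply, Unitary.coe_star, star_star] at h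
    exact h
  have hR' : (star (U : Matrix n n ℂ) * R * (U : Matrix n n ℂ)).PosSemidef := by
    rw [Matrix.star_eq_conjTranspose]
    exact hR.conjTranspose_mul_mul_same _
  have hS' : (star (U : Matrix n n ℂ) * S * (U : Matrix n n ℂ)).PosSemidef := by
    rw [Matrix.star_eq_conjTranspose]
    exact hS.conjTranspose_mul_mul_same _
  have hent : ∀ i, (hA.eigenvalues i : ℂ)
      = (star (U : Matrix n n ℂ) * R * (U : Matrix n n ℂ)) i i
        - (star (U : Matrix n n ℂ) * S * (U : Matrix n n ℂ)) i i := by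
    intro i
    have h2 : star (U : Matrix n n ℂ) * (R - S) * (U : Matrix n n ℂ)
        = star (U : Matrix n n ℂ) * R * (U : Matrix n n ℂ)
          - star (U : Matrix n n ℂ) * S * (U : Matrix n n ℂ) := by
      rw [Matrix.mul_sub, Matrix.sub_mul]
    rw [h2] at hdiag
    have := congrFun (congrFun hdiag.symm i) i
    simpa using this
  have hub : ∀ i, |hA.eigenvalues i|
      ≤ ((star (U : Matrix n n ℂ) * R * (U : Matrix n n ℂ)) i i).re
        + ((star (U : Matrix n n ℂ) * S * (U : Matrix n n ℂ)) i i).re := by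
    intro i
    have h1 := psd_diag_re_nonneg hR' i
    have h2 := psd_diag_re_nonneg hS' i
    have h3 : hA.eigenvalues i
        = ((star (U : Matrix n n ℂ) * R * (U : Matrix n n ℂ)) i i).re
          - ((star (U : Matrix n n ℂ) * S * (U : Matrix n n ℂ)) i i).re := by
      have := congrArg Complex.re (hent i)
      simpa using this
    rw [h3, abs_sub_le_iff]
    constructor <;> linarith
  have hUV : (U : Matrix n n ℂ) * star (U : Matrix n n ℂ) = 1 :=
    Matrix.mem_unitaryGroup_iff.mp U.2
  have htr : ∀ M : Matrix n n ℂ,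
      (star (U : Matrix n n ℂ) * M * (U : Matrix n n ℂ)).trace = M.trace := by
    intro M
    rw [Matrix.trace_mul_cycle, hUV, Matrix.one_mul]
  calc traceNorm (R - S) = ∑ i, |hA.eigenvalues i| := traceNorm_hermitian hA
    _ ≤ ∑ i, (((star (U : Matrix n n ℂ) * R * (U : Matrix n n ℂ)) i i).re
        + ((star (U : Matrix n n ℂ) * S * (U : Matrix n n ℂ)) i i).re) :=
      Finset.sum_le_sum fun i _ => hub i
    _ = (star (U : Matrix n n ℂ) * R * (U : Matrix n n ℂ)).trace.re
        + (star (U : Matrix n n ℂ) * S * (U : Matrix n n ℂ)).trace.re := by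
      rw [Finset.sum_add_distrib]
      simp [Matrix.trace, Matrix.diag, Complex.re_sum]
    _ = R.trace.re + S.trace.re := by rw [htr, htr]
end helpers

section smulhelp
variable {n : Type*} [Fintype n] [DecidableEq n]

lemma posSemidef_real_smul {M : Matrix n n ℂ} (hM : M.PosSemidef) {r : ℝ} (hr : 0 ≤ r) :
    (r • M).PosSemidef := by
  have h : r • M = (r : ℂ) • M := by ext i j; simp [Complex.real_smul]
  rw [h]
  refine .of_dotProduct_mulVec_nonneg ?_ fun x => ?_
  · show ((r : ℂ) • M)ᴴ = _
    rw [Matrix.conjTranspose_smul, hM.1.eq]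
    simp [Complex.star_def, Complex.conj_ofReal]
  · rw [Matrix.smul_mulVec, dotProduct_smul, smul_eq_mul]
    exact mul_nonneg (Complex.zero_le_real.mpr hr) (hM.dotProduct_mulVec_nonneg x)

lemma trace_re_real_smul (r : ℝ) (M : Matrix n n ℂ) : (r • M).trace.re = r * M.trace.re := by
  rw [Matrix.trace_smul]
  simp [Complex.real_smul]
end smulhelp

/-- data-processing-type bound for normalized outputs of positive
trace non-increasing maps. -/
theorem normalized_output_trace_distance
    {ι κ : Type*} [Fintype ι] [DecidableEq ι] [Fintype κ] [DecidableEq κ]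
    (ρ ρ' : Matrix ι ι ℂ) (hρ : IsDensity ρ) (hρ' : IsDensity ρ')
    (E : Matrix ι ι ℂ →ₗ[ℂ] Matrix κ κ ℂ)
    (hpos : ∀ X, X.PosSemidef → (E X).PosSemidef)
    (htni : ∀ X : Matrix ι ι ℂ, X.PosSemidef → (E X).trace.re ≤ X.trace.re)
    (ht : 0 < (E ρ).trace.re) (ht' : 0 < (E ρ').trace.re) :
    (1 / 2) * traceNorm (((E ρ).trace.re)⁻¹ • E ρ - ((E ρ').trace.re)⁻¹ • E ρ')
      ≤ (1 / 2) * traceNorm (ρ - ρ') / (E ρ).trace.re := by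
  obtain ⟨hρpsd, hρtr⟩ := hρ
  obtain ⟨hρpsd', hρtr'⟩ := hρ'
  set a := (E ρ).trace.re with ha
  set b := (E ρ').trace.re with hb
  obtain ⟨P, Q, hP, hQ, hPQ, hsum⟩ := jordan_decomp (hρpsd.1.sub hρpsd'.1)
  have htrPQ : P.trace.re = Q.trace.re := by
    have h0 : (ρ - ρ').trace = 0 := by rw [Matrix.trace_sub, hρtr, hρtr', sub_self]
    rw [hPQ, Matrix.trace_sub] at h0
    have := congrArg Complex.re h0
    simp only [Complex.sub_re, Complex.zero_re] at this
    linarith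
  set c := a⁻¹ - b⁻¹ with hc
  set R := a⁻¹ • E P + (max c 0) • E ρ' with hR
  set S := a⁻¹ • E Q + (max (-c) 0) • E ρ' with hS
  have hRpsd : R.PosSemidef :=
    (posSemidef_real_smul (hpos P hP) (inv_nonneg.mpr ht.le)).add
      (posSemidef_real_smul (hpos ρ' hρpsd') (le_max_right _ _))
  have hSpsd : S.PosSemidef :=
    (posSemidef_real_smul (hpos Q hQ) (inv_nonneg.mpr ht.le)).add
      (posSemidef_real_smul (hpos ρ' hρpsd') (le_max_right _ _))
  have hEPQ : E ρ - E ρ' = E P - E Q := by rw [← map_sub, hPQ, map_sub]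
  have hM : a⁻¹ • E ρ - b⁻¹ • E ρ' = R - S := by
    have h1 : R - S = a⁻¹ • (E P - E Q) + (max c 0 - max (-c) 0) • E ρ' := by
      rw [hR, hS]; module
    rw [h1, max_zero_sub_max_neg_zero_eq_self, ← hEPQ, hc]
    module
  have key := traceNorm_sub_le hRpsd hSpsd
  set p := (E P).trace.re with hp
  set q := (E Q).trace.re with hq
  have htrR : R.trace.re = a⁻¹ * p + max c 0 * b := by
    rw [hR, Matrix.trace_add, Complex.add_re, trace_re_real_smul, trace_re_real_smul]
  have htrS : S.trace.re = a⁻¹ * q + max (-c) 0 * b := by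
    rw [hS, Matrix.trace_add, Complex.add_re, trace_re_real_smul, trace_re_real_smul]
  have hab : a - b = p - q := by
    have := congrArg (fun M : Matrix κ κ ℂ => M.trace.re) hEPQ
    simpa [Matrix.trace_sub, Complex.sub_re] using this
  have hmaxabs : max c 0 + max (-c) 0 = |c| := max_zero_add_max_neg_zero_eq_abs_self c
  have hcb : |c| * b = |q - p| * a⁻¹ := by
    have h1 : c = (b - a) * (a⁻¹ * b⁻¹) := by
      rw [hc]; field_simp
    have h2 : b - a = q - p := by linarith
    rw [h1, h2, abs_mul, abs_of_pos (by positivity : (0:ℝ) < a⁻¹ * b⁻¹)]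
    field_simp
  have hEP := htni P hP
  have hEQ := htni Q hQ
  have hmax : p + q + |q - p| ≤ 2 * P.trace.re := by
    rcases abs_cases (q - p) with ⟨h, _⟩ | ⟨h, _⟩ <;> rw [h] <;> linarith
  have hfinal : traceNorm (R - S) ≤ 2 * P.trace.re * a⁻¹ := by
    have h1 : R.trace.re + S.trace.re = a⁻¹ * (p + q) + |c| * b := by
      rw [htrR, htrS, ← hmaxabs]; ring
    have h2 : a⁻¹ * (p + q) + |q - p| * a⁻¹ ≤ 2 * P.trace.re * a⁻¹ := by
      have := mul_le_mul_of_nonneg_right hmax (inv_nonneg.mpr ht.le)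
      nlinarith [inv_nonneg.mpr ht.le]
    calc traceNorm (R - S) ≤ R.trace.re + S.trace.re := key
      _ = a⁻¹ * (p + q) + |q - p| * a⁻¹ := by rw [h1, hcb]
      _ ≤ 2 * P.trace.re * a⁻¹ := h2
  rw [hM, ← hsum, htrPQ]
  rw [htrPQ] at hfinal
  have h3 : (1 / 2 : ℝ) * (Q.trace.re + Q.trace.re) / a = Q.trace.re * a⁻¹ := by
    field_simp
    ring
  rw [h3]
  linarith
end
end

section
/- With E(X) = Tr(AX)·ω_n + μ·Tr((I−A)X)·π as above, if F(ω_n, ω_target) ≥ 1−ε and Tr(Aρ) ≥ 1−δ, then the fidelity of the normalized output with the target satisfies F(E(ρ)/Tr E(ρ), ω_target) ≥ (1−δ)(1−ε)/(1 − δ + μδ). -/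
open Matrix Filter ComplexOrder
noncomputable section
open scoped Classical
set_option linter.unusedSectionVars false
set_option linter.unusedVariables false
set_option linter.unusedTactic false

variable {d : Type*} [Fintype d] [DecidableEq d]

def Matrix.PosSemidef.sqrt {M : Matrix d d ℂ} (hM : M.PosSemidef) : Matrix d d ℂ :=
  (hM.1.eigenvectorUnitary : Matrix d d ℂ) * diagonal ((↑) ∘ (√·) ∘ hM.1.eigenvalues) *
    (star hM.1.eigenvectorUnitary : Matrix d d ℂ)

open scoped MatrixOrder in
lemma Matrix.PosSemidef.sqrt_eq_cfc {M : Matrix d d ℂ} (hM : M.PosSemidef) :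
    hM.sqrt = CFC.sqrt M := by
  rw [CFC.sqrt_eq_real_sqrt M hM.nonneg, cfcₙ_eq_cfc, hM.1.cfc_eq, IsHermitian.cfc, Unitary.conjStarAlgAut_apply]
  rfl

open scoped MatrixOrder in
lemma Matrix.PosSemidef.posSemidef_sqrt {M : Matrix d d ℂ} (hM : M.PosSemidef) :
    hM.sqrt.PosSemidef := by
  rw [hM.sqrt_eq_cfc]; exact nonneg_iff_posSemidef.mp (CFC.sqrt_nonneg M)

open scoped MatrixOrder in
lemma Matrix.PosSemidef.sqrt_mul_self {M : Matrix d d ℂ} (hM : M.PosSemidef) :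
    hM.sqrt * hM.sqrt = M := by
  rw [hM.sqrt_eq_cfc]; exact CFC.sqrt_mul_sqrt_self M hM.nonneg

open scoped MatrixOrder in
lemma Matrix.PosSemidef.sq_sqrt {M : Matrix d d ℂ} (hM : M.PosSemidef) :
    hM.sqrt ^ 2 = M := by
  rw [hM.sqrt_eq_cfc]; exact CFC.sq_sqrt M hM.nonneg

open scoped MatrixOrder in
lemma Matrix.PosSemidef.eq_sqrt_of_sq_eq {B : Matrix d d ℂ} (hB : B.PosSemidef)
    {M : Matrix d d ℂ} (hM : M.PosSemidef) (hBM : B ^ 2 = M) : B = hM.sqrt := by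
  rw [hM.sqrt_eq_cfc, ← hBM, CFC.sqrt_sq B hB.nonneg]

lemma posSemidef_smul_real {M : Matrix d d ℂ} (hM : M.PosSemidef) {r : ℝ} (hr : 0 ≤ r) :
    ((r : ℂ) • M).PosSemidef := by
  rw [posSemidef_iff_dotProduct_mulVec]
  constructor
  · have := hM.1
    unfold Matrix.IsHermitian at this ⊢
    rw [conjTranspose_smul, this]
    congr 1
    simp
  · intro x
    rw [smul_mulVec, dotProduct_smul, smul_eq_mul]
    exact mul_nonneg (by exact_mod_cast hr) (hM.dotProduct_mulVec_nonneg x)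

lemma trace_nonneg_of_posSemidef {M : Matrix d d ℂ} (hM : M.PosSemidef) : 0 ≤ M.trace := by
  have h : ∀ i, 0 ≤ M i i := fun i => by
    simpa [dotProduct, Pi.single_apply, apply_ite] using hM.dotProduct_mulVec_nonneg (Pi.single i 1)
  exact Finset.sum_nonneg fun i _ => h i

lemma trace_mul_nonneg' {M N : Matrix d d ℂ} (hM : M.PosSemidef) (hN : N.PosSemidef) :
    0 ≤ (M * N).trace := by
  have key : (M * N).trace = (hM.sqrtᴴ * N * hM.sqrt).trace := by
    rw [hM.posSemidef_sqrt.1]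
    conv_lhs => rw [← hM.sqrt_mul_self]
    rw [mul_assoc, Matrix.trace_mul_comm, mul_assoc]
  rw [key]
  exact trace_nonneg_of_posSemidef (hN.conjTranspose_mul_mul_same _)

lemma trace_re_mono {M N : Matrix d d ℂ} (h : (N - M).PosSemidef) :
    M.trace.re ≤ N.trace.re := by
  have h1 := (Complex.nonneg_iff.mp (trace_nonneg_of_posSemidef h)).1
  rw [Matrix.trace_sub] at h1
  simp only [Complex.sub_re] at h1
  linarith

lemma sqrt_posSemidef_mono {M N : Matrix d d ℂ} (hM : M.PosSemidef) (hN : N.PosSemidef)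
    (h : (N - M).PosSemidef) : (hN.sqrt - hM.sqrt).PosSemidef := by
  have hSp : hM.sqrt.PosSemidef := hM.posSemidef_sqrt
  have hTp : hN.sqrt.PosSemidef := hN.posSemidef_sqrt
  have hD : (hN.sqrt - hM.sqrt).IsHermitian := hTp.1.sub hSp.1
  apply hD.posSemidef_iff_eigenvalues_nonneg.mpr
  intro i
  by_contra hneg
  push_neg at hneg
  rw [Pi.zero_apply] at hneg
  set lam : ℝ := hD.eigenvalues i with hlam
  set x : d → ℂ := ⇑(hD.eigenvectorBasis i) with hx
  have hxe : (hN.sqrt - hM.sqrt) *ᵥ x = lam • x := hD.mulVec_eigenvectorBasis i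
  set qT : ℂ := star x ⬝ᵥ hN.sqrt *ᵥ x with hqTdef
  set qS : ℂ := star x ⬝ᵥ hM.sqrt *ᵥ x with hqSdef
  have hqT : 0 ≤ qT := hTp.dotProduct_mulVec_nonneg x
  have hqS : 0 ≤ qS := hSp.dotProduct_mulVec_nonneg x
  have hc : 0 ≤ star x ⬝ᵥ (N - M) *ᵥ x := h.dotProduct_mulVec_nonneg x
  have hNM : N - M = hN.sqrt * (hN.sqrt - hM.sqrt) + (hN.sqrt - hM.sqrt) * hM.sqrt := by
    rw [mul_sub, sub_mul, hN.sqrt_mul_self, hM.sqrt_mul_self]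
    abel
  have e1 : star x ⬝ᵥ (hN.sqrt * (hN.sqrt - hM.sqrt)) *ᵥ x = (lam : ℂ) * qT := by
    rw [← mulVec_mulVec, hxe, mulVec_smul, dotProduct_smul]
    simp [Complex.real_smul, hqTdef]
  have e2 : star x ⬝ᵥ ((hN.sqrt - hM.sqrt) * hM.sqrt) *ᵥ x = (lam : ℂ) * qS := by
    rw [← mulVec_mulVec, dotProduct_mulVec, ← hD.eq, ← star_mulVec, hxe, star_smul,
      smul_dotProduct]
    simp [Complex.real_smul, hqSdef]
  have key : star x ⬝ᵥ (N - M) *ᵥ x = (lam : ℂ) * (qT + qS) := by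
    rw [hNM, add_mulVec, dotProduct_add, e1, e2]; ring
  rw [key] at hc
  have hsum : 0 ≤ qT + qS := add_nonneg hqT hqS
  obtain ⟨hre, him⟩ := Complex.nonneg_iff.mp hsum
  have hcre := (Complex.nonneg_iff.mp hc).1
  rw [Complex.mul_re, Complex.ofReal_re, Complex.ofReal_im, ← him] at hcre
  simp only [zero_mul, mul_zero, sub_zero] at hcre
  have hr0 : (qT + qS).re = 0 := by nlinarith
  have hsum0 : qT + qS = 0 := by
    apply Complex.ext
    · simpa using hr0
    · simpa using him.symm
  have hqT0 : qT = 0 := le_antisymm (by rw [← hsum0]; simpa using hqS) hqT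
  have hqS0 : qS = 0 := by rw [← hsum0, hqT0, zero_add]
  have hTx : hN.sqrt *ᵥ x = 0 := (hTp.dotProduct_mulVec_zero_iff x).mp hqT0
  have hSx : hM.sqrt *ᵥ x = 0 := (hSp.dotProduct_mulVec_zero_iff x).mp hqS0
  have hlx : lam • x = 0 := by
    rw [← hxe, sub_mulVec, hTx, hSx, sub_zero]
  have hxne : x ≠ 0 := by
    have h1 : hD.eigenvectorBasis i ≠ 0 := hD.eigenvectorBasis.orthonormal.ne_zero i
    intro h0
    exact h1 (by ext j; exact congrFun h0 j)
  rcases smul_eq_zero.mp hlx with h0 | h0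
  · exact absurd h0 (ne_of_lt hneg)
  · exact hxne h0


lemma msqrt_of_posSemidef {M : Matrix d d ℂ} (hM : M.PosSemidef) : msqrt M = hM.sqrt :=
  dif_pos hM

lemma msqrt_posSemidef {M : Matrix d d ℂ} (hM : M.PosSemidef) : (msqrt M).PosSemidef := by
  rw [msqrt_of_posSemidef hM]; exact hM.posSemidef_sqrt

lemma conj_posSemidef {M σ : Matrix d d ℂ} (hM : M.PosSemidef) (hσ : σ.PosSemidef) :
    (msqrt σ * M * msqrt σ).PosSemidef := by
  have := hM.conjTranspose_mul_mul_same (msqrt σ)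
  rwa [(msqrt_posSemidef hσ).1] at this

lemma msqrt_smul {M : Matrix d d ℂ} (hM : M.PosSemidef) {r : ℝ} (hr : 0 ≤ r) :
    msqrt ((r : ℂ) • M) = ((Real.sqrt r : ℝ) : ℂ) • msqrt M := by
  have hrM : ((r : ℂ) • M).PosSemidef := posSemidef_smul_real hM hr
  have hB : (((Real.sqrt r : ℝ) : ℂ) • hM.sqrt).PosSemidef :=
    posSemidef_smul_real hM.posSemidef_sqrt (Real.sqrt_nonneg r)
  have hsq : (((Real.sqrt r : ℝ) : ℂ) • hM.sqrt) ^ 2 = (r : ℂ) • M := by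
    rw [smul_pow, hM.sq_sqrt]
    congr 1
    rw [← Complex.ofReal_pow, Real.sq_sqrt hr]
  rw [msqrt_of_posSemidef hrM, msqrt_of_posSemidef hM]
  exact (hB.eq_sqrt_of_sq_eq hrM hsq).symm

lemma fidelity_eq_trace {ρ σ : Matrix d d ℂ} (hρ : ρ.PosSemidef) (hσ : σ.PosSemidef) :
    fidelity ρ σ = ((msqrt (msqrt σ * ρ * msqrt σ)).trace.re) ^ 2 := by
  unfold fidelity traceNorm
  have key : (msqrt ρ * msqrt σ)ᴴ * (msqrt ρ * msqrt σ) = msqrt σ * ρ * msqrt σ := by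
    rw [conjTranspose_mul, (msqrt_posSemidef hρ).1, (msqrt_posSemidef hσ).1]
    simp only [mul_assoc]
    congr 1
    rw [← mul_assoc, msqrt_of_posSemidef hρ, hρ.sqrt_mul_self]
  rw [key]

lemma fidelity_nonneg_trace {M : Matrix d d ℂ} (hM : M.PosSemidef) :
    0 ≤ (msqrt M).trace.re :=
  (Complex.nonneg_iff.mp (trace_nonneg_of_posSemidef (msqrt_posSemidef hM))).1

lemma fidelity_smul {ρ σ : Matrix d d ℂ} (hρ : ρ.PosSemidef) (hσ : σ.PosSemidef)
    {r : ℝ} (hr : 0 ≤ r) : fidelity ((r : ℂ) • ρ) σ = r * fidelity ρ σ := by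
  rw [fidelity_eq_trace (posSemidef_smul_real hρ hr) hσ, fidelity_eq_trace hρ hσ]
  have h1 : msqrt σ * ((r:ℂ) • ρ) * msqrt σ = (r:ℂ) • (msqrt σ * ρ * msqrt σ) := by
    rw [Matrix.mul_smul, Matrix.smul_mul]
  rw [h1, msqrt_smul (conj_posSemidef hρ hσ) hr, Matrix.trace_smul, smul_eq_mul,
    Complex.re_ofReal_mul, mul_pow, Real.sq_sqrt hr]

lemma fidelity_mono_left {ρ ρ' σ : Matrix d d ℂ} (hρ : ρ.PosSemidef) (hρ' : ρ'.PosSemidef)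
    (hσ : σ.PosSemidef) (h : (ρ' - ρ).PosSemidef) : fidelity ρ σ ≤ fidelity ρ' σ := by
  rw [fidelity_eq_trace hρ hσ, fidelity_eq_trace hρ' hσ]
  have hMp : (msqrt σ * ρ * msqrt σ).PosSemidef := conj_posSemidef hρ hσ
  have hNp : (msqrt σ * ρ' * msqrt σ).PosSemidef := conj_posSemidef hρ' hσ
  have hdiff : (msqrt σ * ρ' * msqrt σ - msqrt σ * ρ * msqrt σ).PosSemidef := by
    have := conj_posSemidef h hσ
    convert this using 1
    noncomm_ring
  have hmono := sqrt_posSemidef_mono hMp hNp hdiff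
  have hle : (msqrt (msqrt σ * ρ * msqrt σ)).trace.re
      ≤ (msqrt (msqrt σ * ρ' * msqrt σ)).trace.re := by
    rw [msqrt_of_posSemidef hMp, msqrt_of_posSemidef hNp]
    exact trace_re_mono hmono
  exact pow_le_pow_left₀ (fidelity_nonneg_trace hMp) hle 2

/-- fidelity of the normalized output of the measure-and-prepare map
with the target state. -/
theorem measure_prepare_output_fidelity
    {ι κ : Type*} [Fintype ι] [DecidableEq ι] [Fintype κ] [DecidableEq κ]
    (A : Matrix ι ι ℂ) (hA : A.PosSemidef) (hA1 : ((1 : Matrix ι ι ℂ) - A).PosSemidef)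
    (ωn π ωtarget : Matrix κ κ ℂ)
    (hωn : IsDensity ωn) (hπ : IsDensity π) (hωt : IsDensity ωtarget)
    (ρ : Matrix ι ι ℂ) (hρ : IsDensity ρ)
    (μ : ℝ) (hμ0 : 0 ≤ μ) (hμ1 : μ ≤ 1)
    (ε δ : ℝ) (hε0 : 0 ≤ ε) (hε1 : ε ≤ 1) (hδ0 : 0 ≤ δ) (hδ1 : δ < 1)
    (E : Matrix ι ι ℂ →ₗ[ℂ] Matrix κ κ ℂ)
    (hE : ∀ X, E X = (A * X).trace • ωn
      + ((μ : ℂ) * (((1 : Matrix ι ι ℂ) - A) * X).trace) • π)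
    (hfid : 1 - ε ≤ fidelity ωn ωtarget)
    (hTrA : 1 - δ ≤ (A * ρ).trace.re) :
    (1 - δ) * (1 - ε) / (1 - δ + μ * δ)
      ≤ fidelity (((E ρ).trace.re)⁻¹ • E ρ) ωtarget := by
  obtain ⟨hρP, hρ1⟩ := hρ
  obtain ⟨hωnP, hωn1⟩ := hωn
  obtain ⟨hπP, hπ1⟩ := hπ
  obtain ⟨hωtP, hωt1⟩ := hωt
  set t : ℂ := (A * ρ).trace with ht
  have ht0 : 0 ≤ t := trace_mul_nonneg' hA hρP
  have htre : t = (t.re : ℂ) := Complex.eq_re_of_ofReal_le (r := 0) (by simpa using ht0)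
  set T : ℝ := t.re with hT
  have hu0 : 0 ≤ (((1 : Matrix ι ι ℂ) - A) * ρ).trace := trace_mul_nonneg' hA1 hρP
  have hut : (((1 : Matrix ι ι ℂ) - A) * ρ).trace = 1 - t := by
    rw [Matrix.sub_mul, Matrix.trace_sub, Matrix.one_mul, hρ1, ht]
  have hT1 : T ≤ 1 := by
    have h1 := (Complex.nonneg_iff.mp hu0).1
    rw [hut] at h1
    simp only [Complex.sub_re, Complex.one_re] at h1
    linarith
  have hTlb : 1 - δ ≤ T := hTrA
  have hTpos : 0 < T := lt_of_lt_of_le (by linarith) hTrA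
  have hEρ : E ρ = t • ωn + ((μ:ℂ) * (1 - t)) • π := by rw [hE ρ, hut, ht]
  set c : ℝ := T + μ * (1 - T) with hc
  have hcpos : 0 < c := by nlinarith
  have hcre : (E ρ).trace.re = c := by
    rw [hEρ, Matrix.trace_add, Matrix.trace_smul, Matrix.trace_smul, hωn1, hπ1,
      smul_eq_mul, smul_eq_mul, mul_one, mul_one, htre]
    push_cast
    simp [Complex.add_re, Complex.mul_re, hc]
  set a : ℝ := T / c with ha
  set b : ℝ := μ * (1 - T) / c with hb
  have ha0 : 0 ≤ a := div_nonneg hTpos.le hcpos.le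
  have hb0 : 0 ≤ b := div_nonneg (by nlinarith) hcpos.le
  have hstate : ((E ρ).trace.re)⁻¹ • E ρ = ((a : ℝ) : ℂ) • ωn + ((b : ℝ) : ℂ) • π := by
    rw [hcre, hEρ, htre]
    ext i j
    simp only [Matrix.smul_apply, Matrix.add_apply, smul_eq_mul, Complex.real_smul, ha, hb]
    push_cast
    ring
  rw [hstate]
  have hXP : (((a : ℝ) : ℂ) • ωn + ((b : ℝ) : ℂ) • π).PosSemidef :=
    (posSemidef_smul_real hωnP ha0).add (posSemidef_smul_real hπP hb0)
  have hdiff : ((((a : ℝ) : ℂ) • ωn + ((b : ℝ) : ℂ) • π) - ((a : ℝ) : ℂ) • ωn).PosSemidef := by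
    simpa using posSemidef_smul_real hπP hb0
  have hmono := fidelity_mono_left (posSemidef_smul_real hωnP ha0) hXP hωtP hdiff
  rw [fidelity_smul hωnP hωtP ha0] at hmono
  have hstep : a * (1 - ε) ≤ a * fidelity ωn ωtarget :=
    mul_le_mul_of_nonneg_left hfid ha0
  refine le_trans ?_ (le_trans hstep hmono)
  have hD : 0 < 1 - δ + μ * δ := by nlinarith
  have key : (1 - δ) * c ≤ T * (1 - δ + μ * δ) := by nlinarith
  rw [ha, div_mul_eq_mul_div, div_le_div_iff₀ hD hcpos]
  nlinarith [mul_le_mul_of_nonneg_left key (by linarith : (0:ℝ) ≤ 1 - ε)]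
end
end
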